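/- Equivalence with the declarative system: Γ ⊢ S <: T is derivable in the algorithmic subtyping system if and only if it is derivable in the declarative system obtained by adding explicit reflexivity and transitivity rules and replacing SA-Trans-TVar by the axiom Γ ⊢ X <: U whenever X<:U ∈ Γ, restricted to well-scoped judgments. -/

import Mathlib

inductive Ty where
  | var : ℕ → Ty
  | top : Ty
  | arrow : Ty → Ty → Ty
  | all : ℕ → Ty → Ty → Ty

abbrev Env := List (ℕ × Ty)

def freeVars : Ty → Finset ℕ
  | .var x => {x}
  | .top => ∅
  | .arrow a b => freeVars a ∪ freeVars b
  | .all x a b => freeVars a ∪ (freeVars b \ {x})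

def boundVars (Γ : Env) : Finset ℕ := (Γ.map Prod.fst).toFinset

/-- A type is well-scoped in Γ if all its free variables are bound in Γ. -/
def WellScoped (Γ : Env) (t : Ty) : Prop := freeVars t ⊆ boundVars Γ

/-- The original algorithmic subtyping system for F<:. -/
inductive Subty : Env → Ty → Ty → Prop where
  | top {Γ S} : WellScoped Γ S → Subty Γ S .top
  | refl {Γ X} : X ∈ boundVars Γ → Subty Γ (.var X) (.var X)
  | trans_tvar {Γ X U T} : (X, U) ∈ Γ → Subty Γ U T → Subty Γ (.var X) T
  | arrow {Γ S₁ S₂ T₁ T₂} : Subty Γ T₁ S₁ → Subty Γ S₂ T₂ →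
      Subty Γ (.arrow S₁ S₂) (.arrow T₁ T₂)
  | all {Γ X S₁ S₂ T₁ T₂} : Subty Γ T₁ S₁ → Subty ((X, T₁) :: Γ) S₂ T₂ →
      Subty Γ (.all X S₁ S₂) (.all X T₁ T₂)

/-- The declarative subtyping system, with explicit reflexivity and
    transitivity rules and the variable axiom in place of SA-Trans-TVar. -/
inductive DSub : Env → Ty → Ty → Prop where
  | top {Γ S} : WellScoped Γ S → DSub Γ S .top
  | refl {Γ T} : WellScoped Γ T → DSub Γ T T
  | trans {Γ S Q T} : DSub Γ S Q → DSub Γ Q T → DSub Γ S T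
  | hyp {Γ X U} : (X, U) ∈ Γ → WellScoped Γ U → DSub Γ (.var X) U
  | arrow {Γ S₁ S₂ T₁ T₂} : DSub Γ T₁ S₁ → DSub Γ S₂ T₂ →
      DSub Γ (.arrow S₁ S₂) (.arrow T₁ T₂)
  | all {Γ X S₁ S₂ T₁ T₂} : DSub Γ T₁ S₁ → DSub ((X, T₁) :: Γ) S₂ T₂ →
      DSub Γ (.all X S₁ S₂) (.all X T₁ T₂)

/-!
Declarative derivations become algorithmic ones once reflexivity and transitivity are shown
admissible for the algorithmic system; conversely, SA-Trans-TVar is the variable axiom followed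
by transitivity. Transitivity is proved by well-founded induction on the size of the middle type `Q`,
with an inner induction on the derivation of `S <: Q`. In the quantifier case the body of the
right-hand derivation must be narrowed from the bound `Q₁` to `T₁`, and narrowing only needs
transitivity at the strictly smaller type `Q₁`.
-/

section WellScoped

variable {Γ Γ' : Env} {X : ℕ} {T U A B : Ty}

theorem mem_boundVars : X ∈ boundVars Γ ↔ ∃ U, (X, U) ∈ Γ := by
  simp [boundVars]

@[simp]
theorem boundVars_cons : boundVars ((X, U) :: Γ) = insert X (boundVars Γ) := by
  simp [boundVars]

theorem boundVars_mono (h : Γ ⊆ Γ') : boundVars Γ ⊆ boundVars Γ' := fun x hx => by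
  obtain ⟨U, hU⟩ := mem_boundVars.1 hx
  exact mem_boundVars.2 ⟨U, h hU⟩

theorem WellScoped.mono (h : Γ ⊆ Γ') (hT : WellScoped Γ T) : WellScoped Γ' T :=
  hT.trans (boundVars_mono h)

@[simp]
theorem wellScoped_var : WellScoped Γ (.var X) ↔ X ∈ boundVars Γ := by
  simp [WellScoped, freeVars]

@[simp]
theorem wellScoped_top : WellScoped Γ .top := by
  simp [WellScoped, freeVars]

@[simp]
theorem wellScoped_arrow : WellScoped Γ (.arrow A B) ↔ WellScoped Γ A ∧ WellScoped Γ B := by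
  simp [WellScoped, freeVars, Finset.union_subset_iff]

@[simp]
theorem wellScoped_all :
    WellScoped Γ (.all X A B) ↔ WellScoped Γ A ∧ WellScoped ((X, U) :: Γ) B := by
  simp only [WellScoped, freeVars, Finset.union_subset_iff, boundVars_cons, Finset.insert_eq]
  exact and_congr_right' sdiff_le_iff

end WellScoped

theorem Ty.sizeOf_lt_arrow (A B : Ty) :
    sizeOf A < sizeOf (Ty.arrow A B) ∧ sizeOf B < sizeOf (Ty.arrow A B) := by
  simp only [Ty.arrow.sizeOf_spec]; omega

theorem Ty.sizeOf_lt_all (X : ℕ) (A B : Ty) :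
    sizeOf A < sizeOf (Ty.all X A B) ∧ sizeOf B < sizeOf (Ty.all X A B) := by
  simp only [Ty.all.sizeOf_spec]; omega

namespace Subty

variable {Γ Γ' Δ : Env} {X : ℕ} {S T Q P M N : Ty}

theorem mono (h : Subty Γ S T) (hΓ : Γ ⊆ Γ') : Subty Γ' S T := by
  induction h generalizing Γ' with
  | top hS => exact .top (hS.mono hΓ)
  | refl hX => exact .refl (boundVars_mono hΓ hX)
  | trans_tvar hXU _ ih => exact .trans_tvar (hΓ hXU) (ih hΓ)
  | arrow _ _ ih₁ ih₂ => exact .arrow (ih₁ hΓ) (ih₂ hΓ)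
  | all _ _ ih₁ ih₂ => exact .all (ih₁ hΓ) (ih₂ (List.cons_subset_cons _ hΓ))

theorem wellScoped (h : Subty Γ S T) : WellScoped Γ S ∧ WellScoped Γ T := by
  induction h with
  | top hS => exact ⟨hS, wellScoped_top⟩
  | refl hX => exact ⟨wellScoped_var.2 hX, wellScoped_var.2 hX⟩
  | trans_tvar hXU _ ih => exact ⟨wellScoped_var.2 (mem_boundVars.2 ⟨_, hXU⟩), ih.2⟩
  | arrow _ _ ih₁ ih₂ =>
      exact ⟨wellScoped_arrow.2 ⟨ih₁.2, ih₂.1⟩, wellScoped_arrow.2 ⟨ih₁.1, ih₂.2⟩⟩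
  | all _ _ ih₁ ih₂ =>
      exact ⟨wellScoped_all.2 ⟨ih₁.2, ih₂.1⟩, wellScoped_all.2 ⟨ih₁.1, ih₂.2⟩⟩

theorem refl_of_wellScoped (hT : WellScoped Γ T) : Subty Γ T T := by
  induction T generalizing Γ with
  | var X => exact .refl (wellScoped_var.1 hT)
  | top => exact .top hT
  | arrow A B ihA ihB =>
      obtain ⟨hA, hB⟩ := wellScoped_arrow.1 hT
      exact .arrow (ihA hA) (ihB hB)
  | all X A B ihA ihB =>
      obtain ⟨hA, hB⟩ := (wellScoped_all (U := A)).1 hT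
      exact .all (ihA hA) (ihB hB)

theorem narrow (htrans : ∀ {Γ S T}, Subty Γ S Q → Subty Γ Q T → Subty Γ S T)
    (h : Subty (Δ ++ (X, Q) :: Γ) M N) (hPQ : Subty Γ P Q) :
    Subty (Δ ++ (X, P) :: Γ) M N := by
  generalize hE : Δ ++ (X, Q) :: Γ = E at h
  have hbound : boundVars E = boundVars (Δ ++ (X, P) :: Γ) := by
    subst hE; simp [boundVars]
  induction h generalizing Δ with
  | top hS => exact .top (by rw [WellScoped, ← hbound]; exact hS)
  | refl hY => exact .refl (hbound ▸ hY)
  | @trans_tvar _ Y U _ hYU _ ih =>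
      subst hE
      have hUT := ih rfl hbound
      have hPQ' : Subty (Δ ++ (X, P) :: Γ) P Q :=
        hPQ.mono fun _ hp => List.mem_append_right _ (List.mem_cons_of_mem _ hp)
      rcases List.mem_append.1 hYU with hΔ | hYU
      · exact .trans_tvar (List.mem_append_left _ hΔ) hUT
      rcases List.mem_cons.1 hYU with hYX | hΓ
      · obtain ⟨rfl, rfl⟩ := Prod.mk.inj hYX
        exact .trans_tvar (U := P) (by simp) (htrans hPQ' hUT)
      · exact .trans_tvar (List.mem_append_right _ (List.mem_cons_of_mem _ hΓ)) hUT
  | arrow _ _ ih₁ ih₂ => exact .arrow (ih₁ hE hbound) (ih₂ hE hbound)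
  | all _ _ ih₁ ih₂ =>
      subst hE
      exact .all (ih₁ rfl hbound) (ih₂ (Δ := _ :: Δ) rfl (by simp [hbound]))

theorem trans_of_forall_sizeOf_lt
    (ih : ∀ Q' : Ty, sizeOf Q' < sizeOf Q →
      ∀ {Γ S T}, Subty Γ S Q' → Subty Γ Q' T → Subty Γ S T)
    (h₁ : Subty Γ S Q) (h₂ : Subty Γ Q T) : Subty Γ S T := by
  induction h₁ generalizing T with
  | top hS => cases h₂; exact .top hS
  | refl => exact h₂
  | trans_tvar hXU _ ihU => exact .trans_tvar hXU (ihU ih h₂)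
  | @arrow _ _ _ Q₁ Q₂ hT₁ hS₂ =>
      obtain ⟨hQ₁, hQ₂⟩ := Ty.sizeOf_lt_arrow Q₁ Q₂
      cases h₂ with
      | top => exact .top (Subty.arrow hT₁ hS₂).wellScoped.1
      | arrow hU₁ hU₂ => exact .arrow (ih Q₁ hQ₁ hU₁ hT₁) (ih Q₂ hQ₂ hS₂ hU₂)
  | @all _ X _ _ Q₁ Q₂ hT₁ hS₂ =>
      obtain ⟨hQ₁, hQ₂⟩ := Ty.sizeOf_lt_all X Q₁ Q₂
      cases h₂ with
      | top => exact .top (Subty.all hT₁ hS₂).wellScoped.1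
      | all hU₁ hU₂ =>
          have hS₂' := narrow (Δ := []) (ih Q₁ hQ₁) hS₂ hU₁
          exact .all (ih Q₁ hQ₁ hU₁ hT₁) (ih Q₂ hQ₂ hS₂' hU₂)

theorem trans (h₁ : Subty Γ S Q) (h₂ : Subty Γ Q T) : Subty Γ S T := by
  induction Q using (measure (sizeOf : Ty → ℕ)).wf.induction generalizing Γ S T with
  | _ Q ih => exact trans_of_forall_sizeOf_lt (fun Q' hQ' _ _ _ => ih Q' hQ') h₁ h₂

theorem of_dSub (h : DSub Γ S T) : Subty Γ S T := by
  induction h with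
  | top hS => exact .top hS
  | refl hT => exact refl_of_wellScoped hT
  | trans _ _ ih₁ ih₂ => exact ih₁.trans ih₂
  | hyp hXU hU => exact .trans_tvar hXU (refl_of_wellScoped hU)
  | arrow _ _ ih₁ ih₂ => exact .arrow ih₁ ih₂
  | all _ _ ih₁ ih₂ => exact .all ih₁ ih₂

end Subty

theorem DSub.of_subty {Γ : Env} {S T : Ty} (h : Subty Γ S T) : DSub Γ S T := by
  induction h with
  | top hS => exact .top hS
  | refl hX => exact .refl (wellScoped_var.2 hX)
  | trans_tvar hXU hUT ih => exact .trans (.hyp hXU hUT.wellScoped.1) ih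
  | arrow _ _ ih₁ ih₂ => exact .arrow ih₁ ih₂
  | all _ _ ih₁ ih₂ => exact .all ih₁ ih₂

theorem algorithmic_iff_declarative_general (Γ : Env) (S T : Ty) :
    Subty Γ S T ↔ DSub Γ S T :=
  ⟨DSub.of_subty, Subty.of_dSub⟩

theorem algorithmic_iff_declarative (Γ : Env) (S T : Ty)
    (hS : WellScoped Γ S) (hT : WellScoped Γ T) :
    Subty Γ S T ↔ DSub Γ S T :=
  algorithmic_iff_declarative_general Γ S T
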